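/- The number of duplicative forests reachable from the d-ladder under the duplication order equals a(d), where a(0) = 1 and a(n) = a(n-1) + a(n-1)^2. -/

import Mathlib

mutual
  /-- A duplicative tree: a node colored white (`false`) or black (`true`) with a forest of children. -/
  inductive DTree : Type
    | node : Bool → DForest → DTree
  /-- A duplicative forest: a finite sequence of duplicative trees. -/
  inductive DForest : Type
    | nil : DForest
    | cons : DTree → DForest → DForest
end

def DForest.append : DForest → DForest → DForest
  | .nil, g => g
  | .cons t f, g => .cons t (f.append g)

mutual
  /-- One duplication step inside a tree. -/
  inductive TStep : DTree → DTree → Prop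
    | dup (c : DForest) : TStep (.node false c) (.node true (c.append c))
    | congr (b : Bool) {c c' : DForest} : FStep c c' → TStep (.node b c) (.node b c')
  /-- One duplication step inside a forest. -/
  inductive FStep : DForest → DForest → Prop
    | head {t t' : DTree} (f : DForest) : TStep t t' → FStep (.cons t f) (.cons t' f)
    | tail (t : DTree) {f f' : DForest} : FStep f f' → FStep (.cons t f) (.cons t f')
end

/-- Duplication order on forests. -/
def FLe : DForest → DForest → Prop := Relation.ReflTransGen FStep

mutual
  /-- Number of black nodes of a tree. -/
  def DTree.black : DTree → ℕ
    | .node b c => (cond b 1 0) + DForest.black c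
  /-- Number of black nodes of a forest. -/
  def DForest.black : DForest → ℕ
    | .nil => 0
    | .cons t f => DTree.black t + DForest.black f
end

/-- The d-ladder. -/
def ladder : ℕ → DForest
  | 0 => .nil
  | d + 1 => .cons (.node false (ladder d)) .nil

/-- a(0) = 1, a(n) = a(n-1) + a(n-1)². -/
def seqA : ℕ → ℕ
  | 0 => 1
  | n + 1 => seqA n + (seqA n) ^ 2


/-!
A duplication step never changes the number of trees of a forest, and a step inside
`f.append g` acts either inside `f` or inside `g`. Hence from a single white node over `c`
one reaches exactly the single white nodes over forests `g` reachable from `c`, and the single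
black nodes over `g₁.append g₂` with `g₁`, `g₂` reachable from `c`; the decomposition of
`g₁.append g₂` is unique because `g₁` has as many trees as `c`. So the reachable set of
`l_{d+1}` is in bijection with `S ⊕ S × S`, where `S` is that of `l_d`, and its size is
`a(d) + a(d)²`.
-/

def DForest.length : DForest → ℕ
  | .nil => 0
  | .cons _ f => f.length + 1

theorem DForest.append_inj : ∀ {f₁ f₂ g₁ g₂ : DForest}, f₁.length = f₂.length →
    f₁.append g₁ = f₂.append g₂ → f₁ = f₂ ∧ g₁ = g₂
  | .nil, .nil, _, _, _, h => ⟨rfl, h⟩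
  | .cons _ _, .cons _ _, _, _, hl, h => by
    simp only [DForest.append, DForest.cons.injEq] at h
    obtain ⟨rfl, h⟩ := h
    obtain ⟨rfl, rfl⟩ := append_inj (Nat.succ_injective hl) h
    exact ⟨rfl, rfl⟩

theorem FStep.length_eq : ∀ {f f' : DForest}, FStep f f' → f.length = f'.length
  | .cons _ _, _, .head _ _ => rfl
  | .cons _ _, _, .tail _ s => congrArg (· + 1) s.length_eq

theorem FLe.length_eq {f f' : DForest} (h : FLe f f') : f.length = f'.length := by
  induction h with
  | refl => rfl
  | tail _ s ih => exact ih.trans s.length_eq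

theorem FLe.eq_nil {g : DForest} (h : FLe .nil g) : g = .nil := by
  induction h with
  | refl => rfl
  | tail _ s ih => subst ih; cases s

theorem FStep.append_left : ∀ {f f' : DForest} (g : DForest), FStep f f' →
    FStep (f.append g) (f'.append g)
  | .cons _ _, _, _, .head _ s => .head _ s
  | .cons t _, _, g, .tail _ s => .tail t (s.append_left g)

theorem FStep.append_right : ∀ (f : DForest) {g g' : DForest}, FStep g g' →
    FStep (f.append g) (f.append g')
  | .nil, _, _, s => s
  | .cons t f, _, _, s => .tail t (FStep.append_right f s)

theorem FLe.append {f f' g g' : DForest} (hf : FLe f f') (hg : FLe g g') :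
    FLe (f.append g) (f'.append g') :=
  (hf.lift (DForest.append · g) fun _ _ s => s.append_left g).trans
    (hg.lift (f'.append ·) fun _ _ s => FStep.append_right f' s)

theorem FLe.singleton_node (b : Bool) {c c' : DForest} (h : FLe c c') :
    FLe (.cons (.node b c) .nil) (.cons (.node b c') .nil) :=
  h.lift (p := FStep) (fun c => .cons (.node b c) .nil) fun _ _ s => .head _ (.congr b s)

theorem FStep.of_append : ∀ {f g h : DForest}, FStep (f.append g) h →
    (∃ f', FStep f f' ∧ h = f'.append g) ∨ (∃ g', FStep g g' ∧ h = f.append g')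
  | .nil, _, h, s => .inr ⟨h, s, rfl⟩
  | .cons _ f, _, _, .head _ s => .inl ⟨.cons _ f, .head f s, rfl⟩
  | .cons t _, _, _, .tail _ s => by
    rcases s.of_append with ⟨f', sf, rfl⟩ | ⟨g', sg, rfl⟩
    · exact .inl ⟨.cons t f', .tail t sf, rfl⟩
    · exact .inr ⟨g', sg, rfl⟩

theorem fle_singleton_white_iff (c g : DForest) : FLe (.cons (.node false c) .nil) g ↔
    (∃ g₀, FLe c g₀ ∧ g = .cons (.node false g₀) .nil) ∨
    (∃ g₁ g₂, FLe c g₁ ∧ FLe c g₂ ∧ g = .cons (.node true (g₁.append g₂)) .nil) := by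
  constructor
  · intro h
    induction h with
    | refl => exact .inl ⟨c, .refl, rfl⟩
    | tail _ s ih =>
      rcases ih with ⟨g₀, h₀, rfl⟩ | ⟨g₁, g₂, h₁, h₂, rfl⟩
      · cases s with
        | head _ s =>
          cases s with
          | dup => exact .inr ⟨g₀, g₀, h₀, h₀, rfl⟩
          | congr _ s => exact .inl ⟨_, h₀.tail s, rfl⟩
        | tail _ s => cases s
      · cases s with
        | head _ s =>
          cases s with
          | congr _ s =>
            rcases s.of_append with ⟨g₁', s₁, rfl⟩ | ⟨g₂', s₂, rfl⟩
            · exact .inr ⟨g₁', g₂, h₁.tail s₁, h₂, rfl⟩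
            · exact .inr ⟨g₁, g₂', h₁, h₂.tail s₂, rfl⟩
        | tail _ s => cases s
  · rintro (⟨g₀, h₀, rfl⟩ | ⟨g₁, g₂, h₁, h₂, rfl⟩)
    · exact h₀.singleton_node false
    · exact .head (.head _ (.dup c)) ((h₁.append h₂).singleton_node true)

abbrev Reachable (c : DForest) : Type := {g : DForest // FLe c g}

def graft (c : DForest) :
    Reachable c ⊕ Reachable c × Reachable c → Reachable (.cons (.node false c) .nil)
  | .inl g => ⟨.cons (.node false g.1) .nil, .singleton_node false g.2⟩
  | .inr (g₁, g₂) => ⟨.cons (.node true (g₁.1.append g₂.1)) .nil,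
      (fle_singleton_white_iff c _).2 (.inr ⟨g₁.1, g₂.1, g₁.2, g₂.2, rfl⟩)⟩

theorem graft_bijective (c : DForest) : Function.Bijective (graft c) := by
  constructor
  · rintro (g | ⟨g₁, g₂⟩) (g' | ⟨g₁', g₂'⟩) h <;>
      simp only [graft, Subtype.mk.injEq, DForest.cons.injEq, DTree.node.injEq] at h
    · exact congrArg Sum.inl (Subtype.ext h.1.2)
    · simp at h
    · simp at h
    · have hl := g₁.2.length_eq.symm.trans g₁'.2.length_eq
      obtain ⟨h₁, h₂⟩ := DForest.append_inj hl h.1.2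
      rw [Subtype.ext h₁, Subtype.ext h₂]
  · rintro ⟨g, hg⟩
    rcases (fle_singleton_white_iff c g).1 hg with ⟨g₀, h₀, rfl⟩ | ⟨g₁, g₂, h₁, h₂, rfl⟩
    · exact ⟨.inl ⟨g₀, h₀⟩, rfl⟩
    · exact ⟨.inr (⟨g₁, h₁⟩, ⟨g₂, h₂⟩), rfl⟩

theorem card_reachable_singleton_white (c : DForest) [Finite (Reachable c)] :
    Nat.card (Reachable (.cons (.node false c) .nil)) =
      Nat.card (Reachable c) + Nat.card (Reachable c) ^ 2 := by
  rw [← Nat.card_congr (Equiv.ofBijective _ (graft_bijective c)), Nat.card_sum, Nat.card_prod, sq]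

instance : Subsingleton (Reachable .nil) :=
  ⟨fun g g' => Subtype.ext (g.2.eq_nil.trans g'.2.eq_nil.symm)⟩

theorem finite_reachable_ladder (d : ℕ) : Finite (Reachable (ladder d)) := by
  induction d with
  | zero => exact Finite.of_subsingleton (α := Reachable .nil)
  | succ d ih => exact Finite.of_surjective _ (graft_bijective (ladder d)).2

/-- The number of duplicative forests reachable from the d-ladder equals a(d). -/
theorem ladder_card (d : ℕ) :
    Nat.card {g : DForest // FLe (ladder d) g} = seqA d := by
  induction d with
  | zero =>
    show Nat.card (Reachable .nil) = 1
    exact Nat.card_eq_one_iff_unique.2 ⟨inferInstance, ⟨⟨.nil, .refl⟩⟩⟩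
  | succ d ih =>
    have := finite_reachable_ladder d
    rw [ladder, card_reachable_singleton_white, ih, seqA]
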